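/- arXiv:1910.11823 — 2 statements merged into one kernel-verified Lean document; each statement's English description precedes it below -/
import Mathlib

section
/- For every natural number n ≥ 1, the roots of the Fibonacci product polynomial Q_n are exactly the n distinct real numbers x_l = 4·cos²(πl/(2(n+1))) + 1 for l = 1, 2, ..., n. -/
/-!
Substituting `x = 3 + 2 cos θ` turns the recurrence of `Q_n` into that of `sin ((n + 1) θ) / sin θ`,
so `Q_n (3 + 2 cos (π l / (n + 1))) = 0` for `l = 1, …, n`. These are `n` distinct values, since
`cos` is injective on `[0, π]`, and `Q_n` is a nonzero polynomial of degree at most `n`, so they are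
all of its roots. Finally `4 cos² (θ / 2) + 1 = 3 + 2 cos θ`.
-/

open Polynomial

/-- Fibonacci product polynomials `Q` (over `ℝ`). -/
noncomputable def fibQ : ℕ → Polynomial ℝ
  | 0 => 1
  | 1 => X - 3
  | n + 2 => (X - 3) * fibQ (n + 1) - fibQ n

open Real

lemma fibQ_eval_mul_sin (θ : ℝ) (n : ℕ) :
    (fibQ n).eval (3 + 2 * cos θ) * sin θ = sin ((n + 1) * θ) := by
  induction n using Nat.twoStepInduction with
  | zero => simp [fibQ]
  | one =>
    simp only [fibQ, eval_sub, eval_X, eval_ofNat, Nat.cast_one, one_add_one_eq_two, sin_two_mul]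
    ring
  | more n ih₀ ih₁ =>
    have h₂ : ((n : ℝ) + 2 + 1) * θ = (n + 1 + 1) * θ + θ := by ring
    have h₀ : ((n : ℝ) + 1) * θ = (n + 1 + 1) * θ - θ := by ring
    simp only [fibQ, eval_sub, eval_mul, eval_X, eval_ofNat]
    push_cast at ih₀ ih₁ ⊢
    rw [h₂, sin_add]
    rw [h₀, sin_sub] at ih₀
    linear_combination (2 * cos θ) * ih₁ - ih₀

lemma fibQ_natDegree_le (n : ℕ) : (fibQ n).natDegree ≤ n := by
  induction n using Nat.twoStepInduction with
  | zero => simp [fibQ]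
  | one => simp [fibQ, ← C_ofNat]
  | more n _ ih₁ =>
    have hX : (X - 3 : ℝ[X]).natDegree ≤ 1 := by simp [← C_ofNat]
    exact (natDegree_sub_le_of_le (natDegree_mul_le_of_le hX ih₁) (by omega)).trans (by omega)

lemma fibQ_ne_zero (n : ℕ) : fibQ n ≠ 0 := by
  intro h
  -- at `θ = π / (2 (n + 1))` the right-hand side of `fibQ_eval_mul_sin` is `sin (π / 2) = 1`
  have := fibQ_eval_mul_sin (π / (2 * (n + 1))) n
  rw [h, eval_zero, zero_mul, show ((n : ℝ) + 1) * (π / (2 * (n + 1))) = π / 2 by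
    field_simp, sin_pi_div_two] at this
  exact zero_ne_one this

lemma pi_mul_div_mem_Ioo {l m : ℕ} (hl : 0 < l) (hlm : l < m) :
    π * l / m ∈ Set.Ioo 0 π := by
  have hm : (0 : ℝ) < m := by exact_mod_cast hl.trans hlm
  have hlm' : (l : ℝ) < m := by exact_mod_cast hlm
  refine ⟨by positivity, ?_⟩
  rw [div_lt_iff₀ hm]
  nlinarith [pi_pos]

lemma fibQ_isRoot_three_add_two_cos {n l : ℕ} (hl : 0 < l) (hln : l < n + 1) :
    (fibQ n).IsRoot (3 + 2 * cos (π * l / (n + 1))) := by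
  have hθ := pi_mul_div_mem_Ioo hl hln
  push_cast at hθ
  have hsin : sin (π * l / (n + 1)) ≠ 0 := (sin_pos_of_pos_of_lt_pi hθ.1 hθ.2).ne'
  have h := fibQ_eval_mul_sin (π * l / (n + 1)) n
  rw [show ((n : ℝ) + 1) * (π * l / (n + 1)) = l * π by field_simp, sin_nat_mul_pi] at h
  exact (mul_eq_zero.mp h).resolve_right hsin

lemma injOn_cos_pi_mul_div (m : ℕ) :
    Set.InjOn (fun l : ℕ => cos (π * l / m)) (Set.Ioo 0 m) := by
  intro a ha b hb hab
  have hm : (m : ℝ) ≠ 0 := by exact_mod_cast (ha.1.trans ha.2).ne'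
  have ha' := Set.Ioo_subset_Icc_self (pi_mul_div_mem_Ioo ha.1 ha.2)
  have hb' := Set.Ioo_subset_Icc_self (pi_mul_div_mem_Ioo hb.1 hb.2)
  have h := injOn_cos ha' hb' hab
  rw [div_left_inj' hm, mul_right_inj' pi_ne_zero] at h
  exact_mod_cast h

lemma four_mul_cos_sq_half_add_one (θ : ℝ) : 4 * cos (θ / 2) ^ 2 + 1 = 3 + 2 * cos θ := by
  rw [cos_sq, mul_div_cancel₀ θ two_ne_zero]
  ring

theorem stmt8_general (n : ℕ) :
    (∀ x : ℝ, (fibQ n).IsRoot x ↔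
      ∃ l ∈ Finset.Icc 1 n,
        x = 4 * Real.cos (Real.pi * l / (2 * (n + 1))) ^ 2 + 1) ∧
    Set.InjOn (fun l : ℕ => 4 * Real.cos (Real.pi * l / (2 * (n + 1))) ^ 2 + 1)
      (Finset.Icc 1 n) := by
  set x : ℕ → ℝ := fun l => 4 * cos (π * l / (2 * (n + 1))) ^ 2 + 1
  have hx : ∀ l : ℕ, x l = 3 + 2 * cos (π * l / (n + 1)) := fun l => by
    rw [← four_mul_cos_sq_half_add_one, div_div, mul_comm ((n : ℝ) + 1)]
  have hIcc : (Finset.Icc 1 n : Set ℕ) ⊆ Set.Ioo 0 (n + 1) := fun l hl => by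
    simp only [Finset.coe_Icc, Set.mem_Icc] at hl
    exact ⟨hl.1, by omega⟩
  have hinj : Set.InjOn x (Finset.Icc 1 n) := fun a ha b hb hab => by
    refine injOn_cos_pi_mul_div (n + 1) (hIcc ha) (hIcc hb) ?_
    simp only [hx] at hab
    push_cast
    linarith
  have hroots : (fibQ n).roots = ((Finset.Icc 1 n).image x).val := by
    refine roots_eq_of_natDegree_le_card_of_ne_zero ?_ ?_ (fibQ_ne_zero n)
    · simp only [Finset.mem_image, Finset.mem_Icc, forall_exists_index, and_imp]
      rintro _ l hl₁ hln rfl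
      exact hx l ▸ fibQ_isRoot_three_add_two_cos hl₁ (by omega)
    · rw [Finset.card_image_of_injOn hinj, Nat.card_Icc, Nat.add_sub_cancel]
      exact fibQ_natDegree_le n
  refine ⟨fun y => ?_, hinj⟩
  rw [← mem_roots (fibQ_ne_zero n), hroots, Finset.mem_val, Finset.mem_image]
  exact ⟨fun ⟨l, hl, hly⟩ => ⟨l, hl, hly.symm⟩, fun ⟨l, hl, hly⟩ => ⟨l, hl, hly.symm⟩⟩

theorem stmt8 (n : ℕ) (hn : 1 ≤ n) :
    (∀ x : ℝ, (fibQ n).IsRoot x ↔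
      ∃ l ∈ Finset.Icc 1 n,
        x = 4 * Real.cos (Real.pi * l / (2 * (n + 1))) ^ 2 + 1) ∧
    Set.InjOn (fun l : ℕ => 4 * Real.cos (Real.pi * l / (2 * (n + 1))) ^ 2 + 1)
      (Finset.Icc 1 n) :=
  stmt8_general n
end

section
/- Fix an integer sequence (e_k)_{k≥0} and let χ_{M_n} denote the characteristic polynomial of the n×n tridiagonal matrix M_n with diagonal (e_0,...,e_{n-1}) and sub/super-diagonals 1 (with χ_{M_0} = 1). Then for every n ≥ 0: χ_{M_n} = Q_n + Σ_{k=0}^{n-1} (3 - e_k)·χ_{M_k}·Q_{n-k-1}, where (Q_n) are the Fibonacci product polynomials Q_0 = 1, Q_1(x) = x-3, Q_{n+1}(x) = (x-3)Q_n(x) - Q_{n-1}(x). -/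
open Polynomial

/-- The `n × n` tridiagonal matrix with diagonal entries `e 0, …, e (n-1)` and
sub- and super-diagonal entries equal to `1`. -/
def triM (e : ℕ → ℤ) (n : ℕ) : Matrix (Fin n) (Fin n) ℝ :=
  Matrix.of fun i j =>
    if (i : ℕ) = (j : ℕ) then (e i : ℝ)
    else if (i : ℕ) + 1 = (j : ℕ) ∨ (j : ℕ) + 1 = (i : ℕ) then 1 else 0

/-
Expanding the determinant along the last row gives the three-term recurrence
`χ_{n+2} = (X - e_{n+1}) χ_{n+1} - χ_n`. Splitting `X - e_{n+1} = (X - 3) + (3 - e_{n+1})`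
exhibits `χ` as a solution of the recurrence of `Q` forced by `(3 - e_{n+1}) χ_{n+1}`, and
`Q` is the fundamental solution of that recurrence, so variation of constants (a discrete
Duhamel formula) writes `χ_n` as `Q_n` plus the convolution of the forcing terms with `Q`.
-/

open Finset

namespace Matrix

variable {R : Type*} [CommRing R]

def tridiagonal (d : ℕ → R) (a b : R) (n : ℕ) : Matrix (Fin n) (Fin n) R :=
  of fun i j =>
    if (i : ℕ) = j then d i
    else if (i : ℕ) + 1 = j then a
    else if (j : ℕ) + 1 = i then b else 0

variable (d : ℕ → R) (a b : R)

theorem tridiagonal_apply_self {n : ℕ} (i : Fin n) : tridiagonal d a b n i i = d i := by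
  simp [tridiagonal]

theorem tridiagonal_apply_of_succ_eq {n : ℕ} {i j : Fin n} (h : (i : ℕ) + 1 = j) :
    tridiagonal d a b n i j = a := by
  rw [tridiagonal, of_apply, if_neg (by omega), if_pos h]

theorem tridiagonal_apply_of_eq_succ {n : ℕ} {i j : Fin n} (h : (i : ℕ) = j + 1) :
    tridiagonal d a b n i j = b := by
  rw [tridiagonal, of_apply, if_neg (by omega), if_neg (by omega), if_pos h.symm]

theorem tridiagonal_apply_eq_zero {n : ℕ} {i j : Fin n} (h : (i : ℕ) + 1 < j ∨ (j : ℕ) + 1 < i) :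
    tridiagonal d a b n i j = 0 := by
  rw [tridiagonal, of_apply, if_neg (by omega), if_neg (by omega), if_neg (by omega)]

theorem tridiagonal_submatrix_castSucc (n : ℕ) :
    (tridiagonal d a b (n + 1)).submatrix Fin.castSucc Fin.castSucc = tridiagonal d a b n := by
  ext i j
  simp [tridiagonal]

-- The minor of the entry `b` in the last row; its last column is `(0, …, 0, a)`.
theorem det_tridiagonal_submatrix_castSucc_succAbove (n : ℕ) :
    ((tridiagonal d a b (n + 2)).submatrix Fin.castSucc (Fin.last n).castSucc.succAbove).det =
      a * (tridiagonal d a b n).det := by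
  set B := (tridiagonal d a b (n + 2)).submatrix Fin.castSucc (Fin.last n).castSucc.succAbove
  have hcorner : B (Fin.last n) (Fin.last n) = a :=
    tridiagonal_apply_of_succ_eq d a b (by simp)
  have hcol (i : Fin (n + 1)) (hi : i ≠ Fin.last n) : B i (Fin.last n) = 0 :=
    tridiagonal_apply_eq_zero d a b (Or.inl (by simp [Fin.val_lt_last hi]))
  have hminor :
      B.submatrix (Fin.last n).succAbove (Fin.last n).succAbove = tridiagonal d a b n := by
    ext i j
    simp [B, tridiagonal, Fin.succAbove_castSucc_of_lt]
  rw [det_succ_column B (Fin.last n), Fintype.sum_eq_single (Fin.last n) fun i hi => by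
    rw [hcol i hi, mul_zero, zero_mul], hcorner, hminor, ← two_mul, pow_mul, neg_one_sq, one_pow,
    one_mul]

theorem det_tridiagonal_succ_succ (n : ℕ) :
    (tridiagonal d a b (n + 2)).det =
      d (n + 1) * (tridiagonal d a b (n + 1)).det - a * b * (tridiagonal d a b n).det := by
  set A := tridiagonal d a b (n + 2)
  have hrow (j : Fin (n + 2)) (hj : j ≠ (Fin.last n).castSucc ∧ j ≠ Fin.last (n + 1)) :
      A (Fin.last (n + 1)) j = 0 := by
    refine tridiagonal_apply_eq_zero d a b (Or.inr ?_)
    simp only [ne_eq, Fin.ext_iff, Fin.val_castSucc, Fin.val_last] at hj ⊢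
    omega
  have hsub : A (Fin.last (n + 1)) (Fin.last n).castSucc = b :=
    tridiagonal_apply_of_eq_succ d a b (by simp)
  have hdiag : A (Fin.last (n + 1)) (Fin.last (n + 1)) = d (n + 1) :=
    tridiagonal_apply_self d a b _
  have hodd : (-1 : R) ^ (n + 1 + n) = -1 := Odd.neg_one_pow ⟨n, by ring⟩
  have heven : (-1 : R) ^ (n + 1 + (n + 1)) = 1 := Even.neg_one_pow ⟨n + 1, rfl⟩
  rw [det_succ_row A (Fin.last (n + 1)),
    sum_eq_add (Fin.last n).castSucc (Fin.last (n + 1)) (by simp [Fin.ext_iff])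
      (fun j _ hj => by rw [hrow j hj, mul_zero, zero_mul]) (by simp) (by simp),
    Fin.succAbove_last, det_tridiagonal_submatrix_castSucc_succAbove,
    tridiagonal_submatrix_castSucc, hsub, hdiag]
  simp only [Fin.val_last, Fin.val_castSucc, hodd, heven]
  ring

theorem det_tridiagonal_zero : (tridiagonal d a b 0).det = 1 :=
  det_isEmpty

theorem det_tridiagonal_one : (tridiagonal d a b 1).det = d 0 := by
  simp [tridiagonal]

end Matrix

section ForcedRecurrence

variable {R : Type*} [CommRing R] {c : R} {Q : ℕ → R}

theorem sum_range_mul_succ_succ_of_recurrence (hQ0 : Q 0 = 1) (hQ1 : Q 1 = c)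
    (hQ : ∀ n, Q (n + 2) = c * Q (n + 1) - Q n) (f : ℕ → R) (n : ℕ) :
    ∑ k ∈ range (n + 2), f k * Q (n + 2 - k - 1) =
      c * ∑ k ∈ range (n + 1), f k * Q (n + 1 - k - 1) - ∑ k ∈ range n, f k * Q (n - k - 1) +
        f (n + 1) := by
  have hshift : ∀ k ∈ range n, f k * Q (n + 2 - k - 1) =
      c * (f k * Q (n + 1 - k - 1)) - f k * Q (n - k - 1) := by
    intro k hk
    obtain ⟨m, rfl⟩ := Nat.exists_eq_add_of_lt (mem_range.mp hk)
    rw [show k + m + 1 + 2 - k - 1 = m + 2 by omega, show k + m + 1 + 1 - k - 1 = m + 1 by omega,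
      show k + m + 1 - k - 1 = m by omega, hQ]
    ring
  rw [sum_range_succ, sum_range_succ, sum_range_succ, sum_congr rfl hshift, sum_sub_distrib,
    ← mul_sum, show n + 2 - n - 1 = 1 by omega, show n + 1 - n - 1 = 0 by omega,
    show n + 2 - (n + 1) - 1 = 0 by omega, hQ0, hQ1]
  ring

theorem eq_add_sum_mul_of_forced_recurrence (hQ0 : Q 0 = 1) (hQ1 : Q 1 = c)
    (hQ : ∀ n, Q (n + 2) = c * Q (n + 1) - Q n) {u f : ℕ → R} (hu0 : u 0 = 1)
    (hu1 : u 1 = c + f 0) (hu : ∀ n, u (n + 2) = c * u (n + 1) - u n + f (n + 1)) (n : ℕ) :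
    u n = Q n + ∑ k ∈ range n, f k * Q (n - k - 1) := by
  induction n using Nat.twoStepInduction with
  | zero => simp [hu0, hQ0]
  | one => simp [hu1, hQ0, hQ1]
  | more n ih₀ ih₁ =>
    rw [hu, ih₀, ih₁, hQ, sum_range_mul_succ_succ_of_recurrence hQ0 hQ1 hQ]
    ring

end ForcedRecurrence

open Matrix

theorem charmatrix_triM (e : ℕ → ℤ) (n : ℕ) :
    charmatrix (triM e n) = tridiagonal (fun k => X - C (e k : ℝ)) (-1) (-1) n := by
  ext i j : 1
  by_cases h : i = j
  · simp [h, triM, tridiagonal]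
  · simp only [charmatrix_apply_ne _ _ _ h, triM, tridiagonal, of_apply,
      if_neg (Fin.val_ne_of_ne h)]
    split_ifs <;> simp_all

theorem charpoly_triM_succ_succ (e : ℕ → ℤ) (n : ℕ) :
    (triM e (n + 2)).charpoly =
      (X - C (e (n + 1) : ℝ)) * (triM e (n + 1)).charpoly - (triM e n).charpoly := by
  simp only [charpoly, charmatrix_triM, det_tridiagonal_succ_succ]
  ring

theorem stmt17 (e : ℕ → ℤ) (n : ℕ) :
    (triM e n).charpoly =
      fibQ n + ∑ k ∈ Finset.range n,
        C ((3 : ℝ) - (e k : ℝ)) * (triM e k).charpoly * fibQ (n - k - 1) := by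
  have hsplit : ∀ k, X - C (e k : ℝ) = (X - 3) + C ((3 : ℝ) - e k) := fun k => by
    rw [C_sub, C_ofNat]; ring
  refine eq_add_sum_mul_of_forced_recurrence (c := X - 3) (Q := fibQ)
    (u := fun n => (triM e n).charpoly) (f := fun k => C ((3 : ℝ) - e k) * (triM e k).charpoly)
    rfl rfl (fun _ => rfl) ?_ ?_ (fun k => ?_) n
  · simp only [charpoly, charmatrix_triM, det_tridiagonal_zero]
  · simp only [charpoly, charmatrix_triM, det_tridiagonal_one, det_tridiagonal_zero, hsplit,
      mul_one]
  · rw [charpoly_triM_succ_succ, hsplit]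
    ring
end
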